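/- (Lemma A.3, bounds on û_p and x̂.) Let n ≥ 2, Q = diag(q_1,…,q_n) with q_i > 0, L_c the Laplacian of a connected undirected graph, Q̄ := Q^{-1}𝟙𝟙ᵀQ^{-1}/(𝟙ᵀQ^{-1}𝟙) − Q^{-1}, Φ := −L_cQ + (1/n)𝟙𝟙ᵀ; let γ_c, γ > 0, 0 < θ < 1, ε₁, ε₂ > 0, d̃ ∈ ℝ^n, u_p^-, u_p^+ ∈ ℝ^n, r ∈ ℝ^n, and let ū_p := −Q^{-1}( (𝟙𝟙ᵀ/(𝟙ᵀQ^{-1}𝟙)) d̃ + r ). Define δ_p := min{ min_i (u_p^+ − ū_p)_i , min_j (ū_p − u_p^-)_j }, and δ_θ := (‖Φ^{-1}Q̄²Qd̃‖/‖Φ^{-1}Q̄‖)·(θ/(1−θ)) if ‖Φ^{-1}Q̄‖ ≠ 0, and δ_θ := +∞ otherwise. Assume γ_c < (𝟙ᵀQ^{-1}𝟙) ε₁ / ( ‖𝟙𝟙ᵀQ^{-1} Q̄ Q d̃‖ + ‖𝟙𝟙ᵀQ^{-1}‖ ε₂ ) and ‖Φ^{-1} Q̄² Q d̃‖ · γ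 < (1 − θ) · min{δ_p, δ_θ, ε₂}. Then with û_p := γ(γQ̄ + Φ)^{-1} Q̄² Q d̃ and x̂ := γ_c (𝟙𝟙ᵀQ^{-1}/(𝟙ᵀQ^{-1}𝟙)) (I − γ(γQ̄ + Φ)^{-1} Q̄) Q̄ Q d̃, one has ‖û_p‖ < min{ min_i (u_p^+ − ū_p)_i , min_j (ū_p − u_p^-)_j , ε₂ } and ‖x̂‖ < ε₁. -/

import Mathlib

open Matrix Filter

/-- Euclidean norm on `Fin k → ℝ`. -/
noncomputable def euclNorm {k : ℕ} (v : Fin k → ℝ) : ℝ :=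
  ‖(WithLp.equiv 2 (Fin k → ℝ)).symm v‖

/-- Operator norm on matrices induced by the Euclidean norms. -/
noncomputable def matOpNorm {k l : ℕ} (A : Matrix (Fin k) (Fin l) ℝ) : ℝ :=
  ‖LinearMap.toContinuousLinearMap (Matrix.toEuclideanLin A)‖

/-- The all-ones vector `𝟙`. -/
def onesVec (k : ℕ) : Fin k → ℝ := fun _ => 1

/-- The all-ones matrix `𝟙𝟙ᵀ`. -/
def onesMat (k : ℕ) : Matrix (Fin k) (Fin k) ℝ := Matrix.of fun _ _ => 1

/-- Scalar saturation: `sat(y; l, u) = l` if `y ≤ l`, `u` if `u ≤ y`, and `y` otherwise. -/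
noncomputable def sat1 (y l u : ℝ) : ℝ := if y ≤ l then l else if u ≤ y then u else y

/-- Componentwise (multidimensional) saturation function. -/
noncomputable def satv {k : ℕ} (x xm xp : Fin k → ℝ) : Fin k → ℝ :=
  fun i => sat1 (x i) (xm i) (xp i)

/-!
Write `A = Φ⁻¹Q̄`. Then `γQ̄ + Φ = Φ(1 + γA)`, and the gain condition involving `δ_θ` amounts
to `γ‖A‖ < θ < 1`. Hence `1 + γA` is invertible with
`(1 - θ)‖(1 + γA)⁻¹v‖ ≤ ‖v‖`, so `(1 - θ)‖û_p‖ ≤ γ‖Φ⁻¹Q̄²Qd̃‖`, which the gain condition on `γ`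
makes smaller than `(1 - θ) min{δ_p, ε₂}`. Since `(1 - γ(γQ̄ + Φ)⁻¹Q̄)Q̄Qd̃ = Q̄Qd̃ - û_p`, the bound
on `x̂` is the triangle inequality together with `‖û_p‖ < ε₂` and the condition on `γ_c`.
Invertibility of `Φ` comes from `𝟙ᵀL_c = 0` (which forces `𝟙ᵀx = 0` on `ker Φ`) and
`ker L_c = span 𝟙`.
-/
lemma euclNorm_nonneg {k : ℕ} (v : Fin k → ℝ) : 0 ≤ euclNorm v := norm_nonneg _

lemma euclNorm_eq_zero {k : ℕ} {v : Fin k → ℝ} : euclNorm v = 0 ↔ v = 0 := by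
  simp [euclNorm]

lemma euclNorm_smul {k : ℕ} (c : ℝ) (v : Fin k → ℝ) : euclNorm (c • v) = |c| * euclNorm v := by
  simp [euclNorm, norm_smul]

lemma euclNorm_sub_le {k : ℕ} (v w : Fin k → ℝ) : euclNorm (v - w) ≤ euclNorm v + euclNorm w :=
  norm_sub_le _ _

lemma matOpNorm_nonneg {k l : ℕ} (A : Matrix (Fin k) (Fin l) ℝ) : 0 ≤ matOpNorm A :=
  norm_nonneg _

lemma matOpNorm_smul {k l : ℕ} (c : ℝ) (A : Matrix (Fin k) (Fin l) ℝ) :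
    matOpNorm (c • A) = |c| * matOpNorm A := by
  simp [matOpNorm, norm_smul]

lemma euclNorm_mulVec_le {k l : ℕ} (A : Matrix (Fin k) (Fin l) ℝ) (v : Fin l → ℝ) :
    euclNorm (A *ᵥ v) ≤ matOpNorm A * euclNorm v := by
  simpa [euclNorm, matOpNorm] using
    (LinearMap.toContinuousLinearMap (Matrix.toEuclideanLin A)).le_opNorm
      ((WithLp.equiv 2 (Fin l → ℝ)).symm v)

lemma Matrix.isUnit_of_mulVec_eq_zero {m K : Type*} [Fintype m] [DecidableEq m] [Field K]
    {A : Matrix m m K} (h : ∀ x, A *ᵥ x = 0 → x = 0) : IsUnit A :=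
  mulVec_injective_iff_isUnit.mp fun a b hab =>
    sub_eq_zero.mp (h _ (by rw [mulVec_sub, hab, sub_self]))

lemma one_sub_matOpNorm_mul_euclNorm_le {k : ℕ} (A : Matrix (Fin k) (Fin k) ℝ) (w : Fin k → ℝ) :
    (1 - matOpNorm A) * euclNorm w ≤ euclNorm ((1 + A) *ᵥ w) := by
  have hw : w = (1 + A) *ᵥ w - A *ᵥ w := by
    rw [add_mulVec, one_mulVec, add_sub_cancel_right]
  have := euclNorm_sub_le ((1 + A) *ᵥ w) (A *ᵥ w)
  rw [← hw] at this
  linarith [euclNorm_mulVec_le A w]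

lemma isUnit_one_add_of_matOpNorm_lt_one {k : ℕ} {A : Matrix (Fin k) (Fin k) ℝ}
    (hA : matOpNorm A < 1) : IsUnit (1 + A) := by
  refine Matrix.isUnit_of_mulVec_eq_zero fun w hw => euclNorm_eq_zero.mp ?_
  have := one_sub_matOpNorm_mul_euclNorm_le A w
  rw [hw, show euclNorm (0 : Fin k → ℝ) = 0 from euclNorm_eq_zero.mpr rfl] at this
  nlinarith [euclNorm_nonneg w]

lemma one_sub_matOpNorm_mul_euclNorm_inv_add_mulVec_le {k : ℕ} {Φ B : Matrix (Fin k) (Fin k) ℝ}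
    (hΦ : IsUnit Φ) (hB : matOpNorm (Φ⁻¹ * B) < 1) (y : Fin k → ℝ) :
    (1 - matOpNorm (Φ⁻¹ * B)) * euclNorm ((B + Φ)⁻¹ *ᵥ y) ≤ euclNorm (Φ⁻¹ *ᵥ y) := by
  have hΦdet := (isUnit_iff_isUnit_det Φ).mp hΦ
  have hfac : 1 + Φ⁻¹ * B = Φ⁻¹ * (B + Φ) := by
    rw [mul_add, nonsing_inv_mul _ hΦdet, add_comm]
  have hunit : IsUnit (B + Φ) := by
    have := hΦ.mul (isUnit_one_add_of_matOpNorm_lt_one hB)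
    rwa [hfac, ← mul_assoc, mul_nonsing_inv _ hΦdet, one_mul] at this
  have hsolve : (1 + Φ⁻¹ * B) *ᵥ ((B + Φ)⁻¹ *ᵥ y) = Φ⁻¹ *ᵥ y := by
    rw [mulVec_mulVec, hfac, mul_assoc,
      mul_nonsing_inv _ ((isUnit_iff_isUnit_det _).mp hunit), mul_one]
  simpa [hsolve] using one_sub_matOpNorm_mul_euclNorm_le (Φ⁻¹ * B) ((B + Φ)⁻¹ *ᵥ y)

lemma onesVec_dotProduct {k : ℕ} (x : Fin k → ℝ) : onesVec k ⬝ᵥ x = ∑ i, x i := by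
  simp [dotProduct, onesVec]

lemma onesMat_mulVec {k : ℕ} (x : Fin k → ℝ) : onesMat k *ᵥ x = (∑ i, x i) • onesVec k := by
  ext i
  simp [mulVec, dotProduct, onesMat, onesVec]

lemma onesVec_vecMul_of_isSymm {k : ℕ} {L : Matrix (Fin k) (Fin k) ℝ} (hsymm : L.IsSymm)
    (hL1 : L *ᵥ onesVec k = 0) : onesVec k ᵥ* L = 0 := by
  rw [← hsymm.eq, vecMul_transpose, hL1]

lemma neg_mul_add_smul_onesMat_mulVec {n : ℕ} (L D : Matrix (Fin n) (Fin n) ℝ) (x : Fin n → ℝ) :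
    (-(L * D) + (n : ℝ)⁻¹ • onesMat n) *ᵥ x =
      -(L *ᵥ (D *ᵥ x)) + ((n : ℝ)⁻¹ * ∑ i, x i) • onesVec n := by
  rw [add_mulVec, neg_mulVec, ← mulVec_mulVec, smul_mulVec, onesMat_mulVec, smul_smul]

lemma sum_eq_zero_of_neg_mul_add_smul_onesMat_mulVec_eq_zero {n : ℕ} (hn : n ≠ 0)
    {L D : Matrix (Fin n) (Fin n) ℝ} (hsymm : L.IsSymm) (hL1 : L *ᵥ onesVec n = 0)
    {x : Fin n → ℝ} (hx : (-(L * D) + (n : ℝ)⁻¹ • onesMat n) *ᵥ x = 0) : ∑ i, x i = 0 := by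
  have h := congrArg (onesVec n ⬝ᵥ ·) hx
  simp only [neg_mul_add_smul_onesMat_mulVec, dotProduct_add, dotProduct_neg, dotProduct_smul,
    dotProduct_mulVec, onesVec_vecMul_of_isSymm hsymm hL1, onesVec_dotProduct,
    dotProduct_zero] at h
  simpa [onesVec, hn] using h

lemma isUnit_neg_mul_diagonal_add_smul_onesMat {n : ℕ} (hn : n ≠ 0) {q : Fin n → ℝ}
    (hq : ∀ i, 0 < q i) {L : Matrix (Fin n) (Fin n) ℝ} (hsymm : L.IsSymm)
    (hL1 : L *ᵥ onesVec n = 0) (hker : LinearMap.ker L.mulVecLin = Submodule.span ℝ {onesVec n}) :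
    IsUnit (-(L * diagonal q) + (n : ℝ)⁻¹ • onesMat n) := by
  refine Matrix.isUnit_of_mulVec_eq_zero fun x hx => ?_
  have hsum := sum_eq_zero_of_neg_mul_add_smul_onesMat_mulVec_eq_zero hn hsymm hL1 hx
  rw [neg_mul_add_smul_onesMat_mulVec, hsum, mul_zero, zero_smul, add_zero, neg_eq_zero] at hx
  obtain ⟨c, hc⟩ := Submodule.mem_span_singleton.mp (hker ▸ LinearMap.mem_ker.mpr hx)
  have hquad : ∑ i, q i * x i ^ 2 = 0 := by
    have := congrArg (· ⬝ᵥ x) hc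
    simp only [smul_dotProduct, onesVec_dotProduct, hsum, smul_zero] at this
    rw [this]
    simp [dotProduct, mulVec_diagonal, sq, mul_assoc]
  funext i
  have := (Finset.sum_eq_zero_iff_of_nonneg fun j _ => mul_nonneg (hq j).le (sq_nonneg (x j))).mp
    hquad i (Finset.mem_univ i)
  simpa [(hq i).ne'] using this

lemma mul_lt_of_ne_zero_imp_mul_lt_mul_div {x a γ θ : ℝ} (hx : 0 ≤ x) (ha : 0 ≤ a) (hθ : 0 < θ)
    (h : a ≠ 0 → x * γ < x * θ / a) : γ * a < θ := by
  rcases ha.eq_or_lt with rfl | ha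
  · simpa using hθ
  · have := h ha.ne'
    rw [lt_div_iff₀ ha] at this
    nlinarith

lemma mul_lt_of_one_sub_mul_le {γ a θ w v m : ℝ} (hγ : 0 ≤ γ) (hw : 0 ≤ w) (hθ : θ < 1)
    (hγa : γ * a < θ) (hwv : (1 - γ * a) * w ≤ v) (hv : v * γ < (1 - θ) * m) : γ * w < m := by
  nlinarith [mul_le_mul_of_nonneg_left hwv hγ, mul_nonneg hγ hw]

lemma euclNorm_smul_smul_mulVec_sub_lt {k : ℕ} {P : Matrix (Fin k) (Fin k) ℝ} {z u : Fin k → ℝ}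
    {c s ε ε' : ℝ} (hc : 0 < c) (hε : 0 < ε) (hu : euclNorm u ≤ ε')
    (h : c < s * ε / (euclNorm (P *ᵥ z) + matOpNorm P * ε')) :
    euclNorm (c • s⁻¹ • (P *ᵥ (z - u))) < ε := by
  set D := euclNorm (P *ᵥ z) + matOpNorm P * ε'
  have hPu : euclNorm (P *ᵥ (z - u)) ≤ D := by
    rw [mulVec_sub]
    calc euclNorm (P *ᵥ z - P *ᵥ u) ≤ euclNorm (P *ᵥ z) + euclNorm (P *ᵥ u) := euclNorm_sub_le _ _
      _ ≤ D := by
        have := (euclNorm_mulVec_le P u).trans (mul_le_mul_of_nonneg_left hu (matOpNorm_nonneg P))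
        linarith
  have hD : 0 < D := by
    refine lt_of_le_of_ne ((euclNorm_nonneg _).trans hPu) fun hD => ?_
    rw [← hD, div_zero] at h
    exact hc.not_gt h
  rw [lt_div_iff₀ hD] at h
  have hs : 0 < s := pos_of_mul_pos_left ((mul_pos hc hD).trans h) hε.le
  rw [euclNorm_smul, euclNorm_smul, abs_of_pos hc, abs_of_pos (inv_pos.mpr hs)]
  calc c * (s⁻¹ * euclNorm (P *ᵥ (z - u))) ≤ c * D / s := by
        rw [mul_div_assoc, div_eq_inv_mul]
        gcongr
    _ < ε := (div_lt_iff₀ hs).mpr (by linarith)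

/-- The case `δ_θ = +∞` (when `‖Φ⁻¹Q̄‖ = 0`) is encoded by making the corresponding gain
condition conditional on `‖Φ⁻¹Q̄‖ ≠ 0`. -/
theorem lemmaA3_up_x_bounds_general {n : ℕ} (hn : 2 ≤ n)
    (q : Fin n → ℝ) (hq : ∀ i, 0 < q i)
    (Lc : Matrix (Fin n) (Fin n) ℝ) (hsymm : Lc.IsSymm)
    (hLc1 : Lc *ᵥ onesVec n = 0)
    (hker : LinearMap.ker Lc.mulVecLin = Submodule.span ℝ {onesVec n})
    (Q Qinv Qbar Φ : Matrix (Fin n) (Fin n) ℝ)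
    (hQ : Q = Matrix.diagonal q)
    (hΦ : Φ = -(Lc * Q) + (n : ℝ)⁻¹ • onesMat n)
    (γc γ θ ε₁ ε₂ : ℝ) (hγc : 0 < γc) (hγ : 0 < γ) (hθ0 : 0 < θ) (hθ1 : θ < 1)
    (hε₁ : 0 < ε₁)
    (dtil upm upp : Fin n → ℝ)
    (ubarp : Fin n → ℝ)
    (δp : ℝ)
    (hδp : δp = min (⨅ i, (upp - ubarp) i) (⨅ j, (ubarp - upm) j))
    (δθ : ℝ)
    (hδθ : δθ = euclNorm ((Φ⁻¹ * (Qbar * Qbar * Q)) *ᵥ dtil) /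
      matOpNorm (Φ⁻¹ * Qbar) * (θ / (1 - θ)))
    (hγc_bound : γc < (onesVec n ⬝ᵥ (Qinv *ᵥ onesVec n)) * ε₁ /
      (euclNorm ((onesMat n * Qinv * Qbar * Q) *ᵥ dtil) +
        matOpNorm (onesMat n * Qinv) * ε₂))
    (hγ_bound : euclNorm ((Φ⁻¹ * (Qbar * Qbar * Q)) *ᵥ dtil) * γ <
      (1 - θ) * min δp ε₂)
    (hγ_boundθ : matOpNorm (Φ⁻¹ * Qbar) ≠ 0 →
      euclNorm ((Φ⁻¹ * (Qbar * Qbar * Q)) *ᵥ dtil) * γ < (1 - θ) * δθ)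
    (uhatp xhat : Fin n → ℝ)
    (huhatp : uhatp = γ • (((γ • Qbar + Φ)⁻¹ * (Qbar * Qbar * Q)) *ᵥ dtil))
    (hxhat : xhat = γc • ((onesVec n ⬝ᵥ (Qinv *ᵥ onesVec n))⁻¹ •
      ((onesMat n * Qinv) *ᵥ
        ((1 - γ • ((γ • Qbar + Φ)⁻¹ * Qbar)) *ᵥ ((Qbar * Q) *ᵥ dtil))))) :
    euclNorm uhatp <
      min (min (⨅ i, (upp - ubarp) i) (⨅ j, (ubarp - upm) j)) ε₂ ∧
    euclNorm xhat < ε₁ := by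
  have hΦu : IsUnit Φ :=
    hΦ ▸ hQ ▸ isUnit_neg_mul_diagonal_add_smul_onesMat (by omega) hq hsymm hLc1 hker
  have hgain : γ * matOpNorm (Φ⁻¹ * Qbar) < θ := by
    refine mul_lt_of_ne_zero_imp_mul_lt_mul_div (euclNorm_nonneg _) (matOpNorm_nonneg _) hθ0
      fun ha => (hγ_boundθ ha).trans_eq ?_
    rw [hδθ]
    field_simp [(sub_pos.mpr hθ1).ne']
  have hnorm_smul : matOpNorm (Φ⁻¹ * (γ • Qbar)) = γ * matOpNorm (Φ⁻¹ * Qbar) := by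
    rw [Matrix.mul_smul, matOpNorm_smul, abs_of_pos hγ]
  have hw := one_sub_matOpNorm_mul_euclNorm_inv_add_mulVec_le hΦu
    (hnorm_smul ▸ hgain.trans hθ1) ((Qbar * Qbar * Q) *ᵥ dtil)
  simp only [hnorm_smul, mulVec_mulVec] at hw
  have hu : euclNorm uhatp < min δp ε₂ := by
    rw [huhatp, euclNorm_smul, abs_of_pos hγ]
    exact mul_lt_of_one_sub_mul_le hγ.le (euclNorm_nonneg _) hθ1 hgain hw hγ_bound
  refine ⟨hδp ▸ hu, ?_⟩
  have hinner : (1 - γ • ((γ • Qbar + Φ)⁻¹ * Qbar)) *ᵥ ((Qbar * Q) *ᵥ dtil) =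
      (Qbar * Q) *ᵥ dtil - uhatp := by
    rw [huhatp, sub_mulVec, one_mulVec, smul_mulVec, mulVec_mulVec]
    simp only [mul_assoc]
  rw [hxhat, hinner]
  refine euclNorm_smul_smul_mulVec_sub_lt hγc hε₁ (hu.trans_le (min_le_right _ _)).le ?_
  simpa only [mulVec_mulVec, mul_assoc] using hγc_bound

/-- Lemma A.3, bounds on `û_p` and `x̂`. The case `δ_θ = +∞`
(when `‖Φ⁻¹Q̄‖ = 0`) is encoded by making the corresponding gain condition
conditional on `‖Φ⁻¹Q̄‖ ≠ 0`. -/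
theorem lemmaA3_up_x_bounds {n : ℕ} (hn : 2 ≤ n)
    (q : Fin n → ℝ) (hq : ∀ i, 0 < q i)
    (Lc : Matrix (Fin n) (Fin n) ℝ) (hsymm : Lc.IsSymm)
    (hoff : ∀ i j, i ≠ j → Lc i j ≤ 0)
    (hLc1 : Lc *ᵥ onesVec n = 0)
    (hker : LinearMap.ker Lc.mulVecLin = Submodule.span ℝ {onesVec n})
    (Q Qinv Qbar Φ : Matrix (Fin n) (Fin n) ℝ)
    (hQ : Q = Matrix.diagonal q)
    (hQinv : Qinv = Matrix.diagonal fun i => (q i)⁻¹)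
    (hQbar : Qbar =
      (onesVec n ⬝ᵥ (Qinv *ᵥ onesVec n))⁻¹ • (Qinv * onesMat n * Qinv) - Qinv)
    (hΦ : Φ = -(Lc * Q) + (n : ℝ)⁻¹ • onesMat n)
    (γc γ θ ε₁ ε₂ : ℝ) (hγc : 0 < γc) (hγ : 0 < γ) (hθ0 : 0 < θ) (hθ1 : θ < 1)
    (hε₁ : 0 < ε₁) (hε₂ : 0 < ε₂)
    (dtil r upm upp : Fin n → ℝ)
    (ubarp : Fin n → ℝ)
    (hubarp : ubarp = -(Qinv *ᵥ
      (((onesVec n ⬝ᵥ (Qinv *ᵥ onesVec n))⁻¹ • onesMat n) *ᵥ dtil + r)))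
    (δp : ℝ)
    (hδp : δp = min (⨅ i, (upp - ubarp) i) (⨅ j, (ubarp - upm) j))
    (δθ : ℝ)
    (hδθ : δθ = euclNorm ((Φ⁻¹ * (Qbar * Qbar * Q)) *ᵥ dtil) /
      matOpNorm (Φ⁻¹ * Qbar) * (θ / (1 - θ)))
    (hγc_bound : γc < (onesVec n ⬝ᵥ (Qinv *ᵥ onesVec n)) * ε₁ /
      (euclNorm ((onesMat n * Qinv * Qbar * Q) *ᵥ dtil) +
        matOpNorm (onesMat n * Qinv) * ε₂))
    (hγ_bound : euclNorm ((Φ⁻¹ * (Qbar * Qbar * Q)) *ᵥ dtil) * γ <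
      (1 - θ) * min δp ε₂)
    (hγ_boundθ : matOpNorm (Φ⁻¹ * Qbar) ≠ 0 →
      euclNorm ((Φ⁻¹ * (Qbar * Qbar * Q)) *ᵥ dtil) * γ < (1 - θ) * δθ)
    (uhatp xhat : Fin n → ℝ)
    (huhatp : uhatp = γ • (((γ • Qbar + Φ)⁻¹ * (Qbar * Qbar * Q)) *ᵥ dtil))
    (hxhat : xhat = γc • ((onesVec n ⬝ᵥ (Qinv *ᵥ onesVec n))⁻¹ •
      ((onesMat n * Qinv) *ᵥ
        ((1 - γ • ((γ • Qbar + Φ)⁻¹ * Qbar)) *ᵥ ((Qbar * Q) *ᵥ dtil))))) :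
    euclNorm uhatp <
      min (min (⨅ i, (upp - ubarp) i) (⨅ j, (ubarp - upm) j)) ε₂ ∧
    euclNorm xhat < ε₁ :=
  lemmaA3_up_x_bounds_general hn q hq Lc hsymm hLc1 hker Q Qinv Qbar Φ hQ hΦ γc γ θ ε₁ ε₂ hγc hγ hθ0
    hθ1 hε₁ dtil upm upp ubarp δp hδp δθ hδθ hγc_bound hγ_bound hγ_boundθ uhatp xhat huhatp hxhat
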